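/- arXiv:2412.04932 — 2 statements merged into one kernel-verified Lean document; each statement's English description precedes it below -/
import Mathlib

section
/- Let Γ be a preGarside trickle graph with V(Γ) finite. Then the trickle group Tr(Γ) is torsion-free. -/
open scoped Classical

universe u

namespace SimpleGraph

/-- `y` belongs to the star of `x` in `G` (i.e. `y = x` or `y` is a neighbour of `x`). -/
def InStar {V : Type u} (G : SimpleGraph V) (x y : V) : Prop := y = x ∨ G.Adj x y

end SimpleGraph

/-- A **trickle graph**: a simplicial graph together with a partial order on the vertices,
a vertex labeling `mu` with values in `ℕ≥2 ∪ {∞}`, and, for every vertex `x`, an automorphism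
`phi x` of the star of `x` (encoded as a permutation of the whole vertex set fixing every
vertex outside of the star of `x`), subject to conditions (a)–(g) of Bellingeri–Chemin–Paris. -/
structure TrickleGraph (V : Type u) [PartialOrder V] where
  /-- the underlying simplicial graph -/
  graph : SimpleGraph V
  /-- the vertex labeling, with `⊤` playing the role of `∞` -/
  mu : V → ℕ∞
  /-- the automorphism of the star of each vertex, extended by the identity -/
  phi : V → Equiv.Perm V
  two_le_mu : ∀ x : V, 2 ≤ mu x
  /-- condition (a) -/
  adj_of_lt : ∀ x y : V, x < y → graph.Adj x y
  /-- `phi x` is supported on the star of `x` -/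
  phi_apply_of_not_inStar : ∀ x y : V, ¬ graph.InStar x y → phi x y = y
  /-- `phi x` maps the star of `x` to itself -/
  inStar_phi : ∀ x y : V, graph.InStar x y → graph.InStar x (phi x y)
  /-- `phi x` is a graph automorphism of the (full subgraph spanned by the) star of `x` -/
  adj_phi_iff : ∀ x y z : V, graph.InStar x y → graph.InStar x z →
      (graph.Adj (phi x y) (phi x z) ↔ graph.Adj y z)
  /-- condition (b) -/
  adj_incomp : ∀ x y z : V, graph.Adj x y → ¬ x ≤ y → ¬ y ≤ x → z ≤ y →
      graph.Adj x z ∧ ¬ x ≤ z ∧ ¬ z ≤ x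
  /-- condition (c) -/
  le_phi_iff : ∀ x y z : V, graph.InStar x y → graph.InStar x z →
      (phi x z ≤ phi x y ↔ z ≤ y)
  /-- condition (d) -/
  lt_of_phi_ne : ∀ x y : V, graph.InStar x y → phi x y ≠ y → y < x
  /-- condition (e): if `mu x` is finite then the order of `phi x` divides `mu x` -/
  phi_pow_mu : ∀ x : V, phi x ^ (mu x).untopD 0 = 1
  /-- condition (f) -/
  mu_phi : ∀ x y : V, graph.InStar x y → mu (phi x y) = mu y
  /-- condition (g) -/
  phi_phi : ∀ x y z : V, z < y → y < x →
      phi x (phi y z) = phi (phi x y) (phi x z)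

namespace TrickleGraph

variable {V : Type u} [PartialOrder V]

/-- The set of defining relators of the trickle group: `x ^ (mu x)` whenever `mu x ≠ ∞`, and
`phi_x(y) · x · (phi_y(x) · y)⁻¹` for every edge `{x, y}`. -/
def rels (T : TrickleGraph V) : Set (FreeGroup V) :=
  {r | ∃ (x : V) (n : ℕ), T.mu x = (n : ℕ∞) ∧ r = FreeGroup.of x ^ n} ∪
  {r | ∃ x y : V, T.graph.Adj x y ∧
      r = FreeGroup.of (T.phi x y) * FreeGroup.of x *
          (FreeGroup.of (T.phi y x) * FreeGroup.of y)⁻¹}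

end TrickleGraph

/-- The **trickle group** of a trickle graph. -/
abbrev TrickleGroup {V : Type u} [PartialOrder V] (T : TrickleGraph V) : Type u :=
  PresentedGroup T.rels

namespace TrickleGraph

variable {V : Type u} [PartialOrder V]

/-- The image of a vertex in the trickle group. -/
def gen (T : TrickleGraph V) (x : V) : TrickleGroup T := PresentedGroup.of x

/-- `mu` converted to a natural number, with `∞` mapped to `0` (so that `ZMod (T.muNat x)`
is the group `ℤ_{mu x}` of the paper, `ZMod 0 = ℤ` corresponding to `mu x = ∞`). -/
def muNat (T : TrickleGraph V) (x : V) : ℕ := (T.mu x).untopD 0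

/-- The power `phi_x^a` for an exponent `a ∈ ℤ_{mu x}`; it is well defined on representatives
by condition (e). -/
def phiPow (T : TrickleGraph V) (x : V) (a : ZMod (T.muNat x)) : Equiv.Perm V :=
  T.phi x ^ (ZMod.cast a : ℤ)

theorem mu_phi_apply (T : TrickleGraph V) (x y : V) : T.mu (T.phi x y) = T.mu y := by
  by_cases h : T.graph.InStar x y
  · exact T.mu_phi x y h
  · rw [T.phi_apply_of_not_inStar x y h]

theorem mu_phi_zpow (T : TrickleGraph V) (x : V) :
    ∀ (n : ℤ) (y : V), T.mu ((T.phi x ^ n) y) = T.mu y := by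
  have hinv : ∀ y : V, T.mu ((T.phi x)⁻¹ y) = T.mu y := by
    intro y
    conv_rhs => rw [← Equiv.apply_symm_apply (T.phi x) y]
    exact (T.mu_phi_apply x ((T.phi x)⁻¹ y)).symm
  intro n
  induction n using Int.induction_on with
  | zero => intro y; simp
  | succ k ih =>
      intro y
      have h : (T.phi x ^ ((k : ℤ) + 1)) y = (T.phi x ^ (k : ℤ)) (T.phi x y) := by
        rw [zpow_add_one]; rfl
      rw [h, ih (T.phi x y), T.mu_phi_apply]
  | pred k ih =>
      intro y
      have h : (T.phi x ^ (-(k : ℤ) - 1)) y = (T.phi x ^ (-(k : ℤ))) ((T.phi x)⁻¹ y) := by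
        rw [zpow_sub_one]; rfl
      rw [h, ih ((T.phi x)⁻¹ y), hinv]

theorem mu_phiPow (T : TrickleGraph V) (x : V) (a : ZMod (T.muNat x)) (y : V) :
    T.mu ((T.phiPow x a) y) = T.mu y :=
  T.mu_phi_zpow x _ y

theorem muNat_phiPow (T : TrickleGraph V) (x : V) (a : ZMod (T.muNat x)) (y : V) :
    T.muNat ((T.phiPow x a) y) = T.muNat y :=
  congrArg (fun m : ℕ∞ => m.untopD 0) (T.mu_phiPow x a y)

end TrickleGraph

/-- Transport of a `ZMod` element along an equality of moduli. -/
def zmodCongr {m k : ℕ} (h : m = k) (a : ZMod m) : ZMod k := by subst h; exact a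

theorem zmodCongr_ne_zero {m k : ℕ} (h : m = k) {a : ZMod m} (ha : a ≠ 0) :
    zmodCongr h a ≠ 0 := by subst h; exact ha

/-- A **syllable** `x^a`, where `x` is a vertex and `a ∈ ℤ_{mu x} \ {0}`. -/
def Syllable {V : Type u} [PartialOrder V] (T : TrickleGraph V) : Type u :=
  Σ x : V, {a : ZMod (T.muNat x) // a ≠ 0}

namespace Syllable

variable {V : Type u} [PartialOrder V] {T : TrickleGraph V}

/-- The element of the trickle group represented by a syllable. -/
def elm (s : Syllable T) : TrickleGroup T :=
  (PresentedGroup.of s.1 : TrickleGroup T) ^ (ZMod.cast s.2.val : ℤ)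

end Syllable

/-- Syllabic words. -/
abbrev SylWord {V : Type u} [PartialOrder V] (T : TrickleGraph V) := List (Syllable T)

/-- The element of the trickle group represented by a syllabic word. -/
def SylWord.eval {V : Type u} [PartialOrder V] {T : TrickleGraph V} (w : SylWord T) :
    TrickleGroup T :=
  (w.map Syllable.elm).prod

/-- Torsion-freeness as in the older Mathlib: no nontrivial element has finite order. -/
def Monoid.IsTorsionFree (G : Type*) [Monoid G] : Prop :=
  ∀ g : G, g ≠ 1 → ¬IsOfFinOrder g

/-!
Let `x` be a maximal vertex of a lower set `Λ` of vertices. The relations involving `x` say that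
conjugation by `x` acts on the subgroup generated by the link of `x` through `phi x`, which is an
automorphism of the trickle group of the link by condition (g). So the trickle group of `Λ`
embeds into the HNN extension of the trickle group of `Λ ∖ {x}` along that automorphism, provided
the link group embeds into the group of `Λ ∖ {x}`; the same HNN description shows by induction
that all inclusions of lower sets induce embeddings. HNN extensions of torsion-free groups are
torsion-free: an element of finite order is conjugate to a cyclically reduced word, whose powers
are reduced and hence nontrivial by Britton's lemma. Induction over lower sets concludes.
-/

theorem Monoid.isTorsionFree_iff_pow_eq_one {G : Type*} [Monoid G] :
    Monoid.IsTorsionFree G ↔ ∀ (g : G) (n : ℕ), 0 < n → g ^ n = 1 → g = 1 := by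
  simp only [Monoid.IsTorsionFree, isOfFinOrder_iff_pow_eq_one]
  grind

namespace Monoid.IsTorsionFree

variable {G H : Type*} [Monoid G] [Monoid H]

theorem of_injective {f : G →* H} (hf : Function.Injective f) (hH : Monoid.IsTorsionFree H) :
    Monoid.IsTorsionFree G := fun g hg hfin =>
  hH (f g) (fun h => hg (hf (h.trans f.map_one.symm))) (hf.isOfFinOrder_iff.2 hfin)

theorem of_subsingleton [Subsingleton G] : Monoid.IsTorsionFree G :=
  fun g hg _ => hg (Subsingleton.elim g 1)

end Monoid.IsTorsionFree

theorem LowerSet.mem_erase_iff_ne_of_maximal {V : Type*} [PartialOrder V] {Λ : LowerSet V}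
    {x v : V} (hx : Maximal (· ∈ Λ) x) (hv : v ∈ Λ) : v ∈ Λ.erase x ↔ v ≠ x := by
  rw [← SetLike.mem_coe, LowerSet.coe_erase]
  simp only [Set.mem_sdiff, SetLike.mem_coe, UpperSet.coe_Ici, Set.mem_Ici, hv, true_and]
  exact ⟨fun h e => h (e ▸ le_rfl), fun h hle => h (hx.eq_of_ge hv hle)⟩

namespace HNNExtension

variable {G : Type*} [Group G] {A B : Subgroup G} {φ : A ≃* B}

variable (φ) in
def listProd (L : List (ℤˣ × G)) : HNNExtension G A B φ :=
  (L.map fun p => t ^ (p.1 : ℤ) * of p.2).prod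

@[simp] theorem listProd_nil : listProd φ ([] : List (ℤˣ × G)) = 1 := rfl

@[simp] theorem listProd_cons (p : ℤˣ × G) (L : List (ℤˣ × G)) :
    listProd φ (p :: L) = t ^ (p.1 : ℤ) * of p.2 * listProd φ L := rfl

@[simp] theorem listProd_append (L M : List (ℤˣ × G)) :
    listProd φ (L ++ M) = listProd φ L * listProd φ M := by
  simp [listProd]

variable (A B) in
/-- Reduced words (`NormalWord.ReducedWord`) are the chains of this relation. -/
def NoPinch (p q : ℤˣ × G) : Prop := p.2 ∈ toSubgroup A B p.1 → p.1 = q.1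

theorem isChain_noPinch_concat {M : List (ℤˣ × G)} {u : ℤˣ} {g : G} (g' : G)
    (h : (M ++ [(u, g)]).IsChain (NoPinch A B)) : (M ++ [(u, g')]).IsChain (NoPinch A B) := by
  rw [List.isChain_append] at h ⊢
  refine ⟨h.1, List.isChain_singleton _, fun p hp q hq => ?_⟩
  obtain rfl : (u, g') = q := by simpa using hq
  exact h.2.2 p hp (u, g) rfl

theorem t_zpow_mul_of_mul_t_zpow_inv (u : ℤˣ) {a : G} (ha : a ∈ toSubgroup A B u) :
    t ^ (u : ℤ) * of a * (t ^ (u : ℤ))⁻¹ =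
      (of (toSubgroupEquiv φ u ⟨a, ha⟩ : G) : HNNExtension G A B φ) := by
  rcases Int.units_eq_one_or u with rfl | rfl
  · exact (equiv_eq_conj (φ := φ) ⟨a, ha⟩).symm
  · exact (equiv_symm_eq_conj (φ := φ) ⟨a, ha⟩).symm

/-- Powers of a cyclically reduced word are reduced, so by Britton's lemma they are not in `G`. -/
theorem listProd_pow_ne_one {K : List (ℤˣ × G)} (hK : K ≠ []) (hred : K.IsChain (NoPinch A B))
    (hcyc : ∀ p ∈ K.getLast?, ∀ q ∈ K.head?, NoPinch A B p q) {n : ℕ} (hn : 0 < n) :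
    listProd φ K ^ n ≠ 1 := by
  intro hpow
  have hchain : (List.replicate n K).flatten.IsChain (NoPinch A B) :=
    (List.isChain_flatten (by simp [hK])).2
      ⟨fun l hl => List.eq_of_mem_replicate hl ▸ hred, List.isChain_replicate_of_rel n hcyc⟩
  have hprod : (⟨1, _, hchain⟩ : NormalWord.ReducedWord G A B).prod φ = listProd φ K ^ n := by
    simp [NormalWord.ReducedWord.prod, listProd, List.map_flatten, List.prod_flatten,
      List.map_replicate]
  have hnil := ReducedWord.toList_eq_nil_of_mem_of_range φ _ (hprod ▸ hpow ▸ one_mem _)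
  exact hK (List.flatten_eq_nil_iff.1 hnil K (List.mem_replicate.2 ⟨hn.ne', rfl⟩))

/-- Moving `c` into the last letter, `listProd L * of c` becomes a word that is either cyclically
reduced, hence of infinite order, or begins and ends with a pinch, and is then conjugate to a word
shorter by two letters. -/
theorem listProd_mul_of_eq_one_of_pow_eq_one (hG : Monoid.IsTorsionFree G) {n : ℕ} (hn : 0 < n)
    (L : List (ℤˣ × G)) (c : G) (hL : L.IsChain (NoPinch A B))
    (hpow : (listProd φ L * of c) ^ n = 1) : listProd φ L * of c = 1 := by
  induction hk : L.length using Nat.strong_induction_on generalizing L c with | _ k ih =>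
  rcases L.eq_nil_or_concat' with rfl | ⟨M, ⟨u, g⟩, rfl⟩
  · have hc : c ^ n = 1 := of_injective (φ := φ) (by simpa using hpow)
    simp [Monoid.isTorsionFree_iff_pow_eq_one.1 hG c n hn hc]
  set K := M ++ [(u, g * c)]
  have hK : K.IsChain (NoPinch A B) := isChain_noPinch_concat _ hL
  have hLK : listProd φ (M ++ [(u, g)]) * of c = listProd φ K := by simp [K, mul_assoc]
  rw [hLK] at hpow ⊢
  rcases M with _ | ⟨⟨u₁, g₁⟩, M₁⟩
  · exact absurd hpow (listProd_pow_ne_one (by simp [K]) hK (by simp [K, NoPinch]) hn)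
  by_cases hcyc : NoPinch A B (u, g * c) (u₁, g₁)
  · exact absurd hpow (listProd_pow_ne_one (by simp [K]) hK (by
      rw [List.getLast?_concat]
      show ∀ p ∈ some (u, g * c), ∀ q ∈ some (u₁, g₁), _
      simpa using hcyc) hn)
  obtain ⟨ha, hne⟩ : g * c ∈ toSubgroup A B u ∧ u ≠ u₁ := by simpa [NoPinch] using hcyc
  have hu₁ : (u₁ : ℤ) = -u := by
    rcases Int.units_eq_one_or u with rfl | rfl <;>
      rcases Int.units_eq_one_or u₁ with rfl | rfl <;> simp_all
  set b : G := ((toSubgroupEquiv φ u ⟨g * c, ha⟩ : toSubgroup A B (-u)) : G)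
  have hconj : listProd φ K = (t ^ (u₁ : ℤ) * of g₁) * (listProd φ M₁ * of (b * g₁)) *
      (t ^ (u₁ : ℤ) * of g₁)⁻¹ := by
    simp only [K, b, ← t_zpow_mul_of_mul_t_zpow_inv u ha, hu₁, List.cons_append, listProd_cons,
      listProd_append, map_mul]
    simp [zpow_neg, mul_assoc]
  have hM₁ : M₁.IsChain (NoPinch A B) := hK.tail.left_of_append
  have hshort := ih M₁.length (by simp [← hk]) M₁ (b * g₁) hM₁
    (by rwa [hconj, conj_pow, conj_eq_one_iff] at hpow) rfl
  rw [hconj, hshort, mul_one, mul_inv_cancel]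

theorem isTorsionFree (hG : Monoid.IsTorsionFree G) :
    Monoid.IsTorsionFree (HNNExtension G A B φ) := by
  refine Monoid.isTorsionFree_iff_pow_eq_one.2 fun x n hn hx => ?_
  obtain ⟨d⟩ := NormalWord.TransversalPair.nonempty G A B
  set w := NormalWord.equiv φ d x
  have hw : of w.head * listProd φ w.toList = x := (NormalWord.equiv φ d).symm_apply_apply x
  have hconj : x = of w.head * (listProd φ w.toList * of w.head) * (of w.head)⁻¹ := by
    rw [← hw]; group
  rw [hconj, conj_pow, conj_eq_one_iff] at hx
  rw [hconj, listProd_mul_of_eq_one_of_pow_eq_one hG hn w.toList w.head w.chain hx, mul_one,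
    mul_inv_cancel]

end HNNExtension

theorem SimpleGraph.inStar_induce_iff {V : Type*} {G : SimpleGraph V} {s : Set V} {a b : s} :
    (G.induce s).InStar a b ↔ G.InStar a b := by
  simp [SimpleGraph.InStar, Subtype.ext_iff]

namespace TrickleGraph

variable {V : Type*} [PartialOrder V] (T : TrickleGraph V)

theorem phi_apply_of_not_lt {x y : V} (h : ¬ y < x) : T.phi x y = y := by
  by_contra hne
  by_cases hy : T.graph.InStar x y
  · exact h (T.lt_of_phi_ne x y hy hne)
  · exact hne (T.phi_apply_of_not_inStar x y hy)

@[simp] theorem phi_self (x : V) : T.phi x x = x :=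
  T.phi_apply_of_not_lt (lt_irrefl x)

theorem phi_lt {x y : V} (h : y < x) : T.phi x y < x := by
  have hle : T.phi x y ≤ x := by
    simpa using (T.le_phi_iff x x y (Or.inl rfl) (Or.inr (T.adj_of_lt y x h).symm)).2 h.le
  refine hle.lt_of_ne fun heq => h.ne ((T.phi x).injective ?_)
  rw [heq, phi_self]

theorem phi_eq_or_lt (x y : V) : T.phi x y = y ∨ T.phi x y < x := by
  by_cases h : y < x
  · exact Or.inr (T.phi_lt h)
  · exact Or.inl (T.phi_apply_of_not_lt h)

theorem phi_mem_iff {Λ : Set V} (hΛ : IsLowerSet Λ) {x : V} (hx : x ∈ Λ) (y : V) :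
    T.phi x y ∈ Λ ↔ y ∈ Λ := by
  by_cases h : y < x
  · exact iff_of_true (hΛ (T.phi_lt h).le hx) (hΛ h.le hx)
  · rw [T.phi_apply_of_not_lt h]

theorem adj_phi_iff_adj {x y : V} : T.graph.Adj x (T.phi x y) ↔ T.graph.Adj x y := by
  have hstar : T.graph.InStar x (T.phi x y) ↔ T.graph.InStar x y := by
    refine ⟨fun h => ?_, T.inStar_phi x y⟩
    by_contra hy
    exact hy (T.phi_apply_of_not_inStar x y hy ▸ h)
  have hne : T.phi x y ≠ x ↔ y ≠ x := (T.phi x).injective.ne_iff' (T.phi_self x)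
  simp only [SimpleGraph.InStar] at hstar
  constructor <;> intro h
  · exact (hstar.1 (Or.inr h)).resolve_left (hne.1 h.ne')
  · exact (hstar.2 (Or.inr h)).resolve_left (hne.2 h.ne')

/-- Condition (g) for triangles with `¬ x < y`. When `x` and `y` are incomparable, (b) makes
`phi x` fix everything below `y`; when `¬ z < y`, (c) gives `¬ phi x z < phi x y`. -/
theorem phi_phi_of_adj {x y z : V} (hxy : T.graph.Adj x y) (hxz : T.graph.Adj x z)
    (hyz : T.graph.Adj y z) (hy : ¬ x < y) :
    T.phi x (T.phi y z) = T.phi (T.phi x y) (T.phi x z) := by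
  by_cases hzy : z < y
  · by_cases hyx : y < x
    · exact T.phi_phi x y z hzy hyx
    have hxy' : ¬ x ≤ y := fun h => hy (h.lt_of_ne hxy.ne)
    have hyx' : ¬ y ≤ x := fun h => hyx (h.lt_of_ne hxy.ne')
    have hfix : ∀ w ≤ y, T.phi x w = w := fun w hw =>
      T.phi_apply_of_not_lt fun h => (T.adj_incomp x y w hxy hxy' hyx' hw).2.2 h.le
    have hw : T.phi y z ≤ y := (T.phi_eq_or_lt y z).elim (fun h => h.symm ▸ hzy.le) le_of_lt
    rw [hfix _ hw, hfix y le_rfl, hfix z hzy.le]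
  · have hfz : ¬ T.phi x z < T.phi x y := fun hlt =>
      hzy (((T.le_phi_iff x y z (Or.inr hxy) (Or.inr hxz)).1 hlt.le).lt_of_ne hyz.ne')
    rw [T.phi_apply_of_not_lt hzy, T.phi_apply_of_not_lt hfz]

theorem adj_of_le_of_adj {x y z : V} (hxy : T.graph.Adj x y) (hy : ¬ x < y) (hzy : z ≤ y) :
    T.graph.Adj x z := by
  by_cases hyx : y < x
  · exact (T.adj_of_lt z x (hzy.trans_lt hyx)).symm
  · exact (T.adj_incomp x y z hxy (fun h => hy (h.lt_of_ne hxy.ne))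
      (fun h => hyx (h.lt_of_ne hxy.ne')) hzy).1

def restrict (Λ : LowerSet V) : TrickleGraph Λ where
  graph := T.graph.induce Λ
  mu a := T.mu a
  phi a := (T.phi a).subtypePerm (T.phi_mem_iff Λ.lower a.2)
  two_le_mu a := T.two_le_mu a
  adj_of_lt a b h := T.adj_of_lt a b h
  phi_apply_of_not_inStar a b h :=
    Subtype.ext (T.phi_apply_of_not_inStar a b (SimpleGraph.inStar_induce_iff.not.1 h))
  inStar_phi a b h := SimpleGraph.inStar_induce_iff.2 (T.inStar_phi a b
    (SimpleGraph.inStar_induce_iff.1 h))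
  adj_phi_iff a b c hb hc := T.adj_phi_iff a b c (SimpleGraph.inStar_induce_iff.1 hb)
    (SimpleGraph.inStar_induce_iff.1 hc)
  adj_incomp a b c hab hab' hba' hcb := T.adj_incomp a b c hab hab' hba' hcb
  le_phi_iff a b c hb hc := T.le_phi_iff a b c (SimpleGraph.inStar_induce_iff.1 hb)
    (SimpleGraph.inStar_induce_iff.1 hc)
  lt_of_phi_ne a b hb hne := T.lt_of_phi_ne a b (SimpleGraph.inStar_induce_iff.1 hb)
    (fun h => hne (Subtype.ext h))
  phi_pow_mu a := by
    rw [Equiv.Perm.subtypePerm_pow]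
    simp_rw [T.phi_pow_mu]
    rfl
  mu_phi a b hb := T.mu_phi a b (SimpleGraph.inStar_induce_iff.1 hb)
  phi_phi a b c hcb hba := Subtype.ext (T.phi_phi a b c hcb hba)

theorem gen_phi_mul_gen {x y : V} (h : T.graph.Adj x y) :
    T.gen (T.phi x y) * T.gen x = T.gen (T.phi y x) * T.gen y := by
  have hr : FreeGroup.of (T.phi x y) * FreeGroup.of x *
      (FreeGroup.of (T.phi y x) * FreeGroup.of y)⁻¹ ∈ T.rels := Or.inr ⟨x, y, h, rfl⟩
  have := PresentedGroup.one_of_mem hr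
  rwa [map_mul, map_mul, map_inv, map_mul, mul_inv_eq_one] at this

variable {T}

theorem hom_ext {H : Type*} [Group H] {f g : TrickleGroup T →* H}
    (h : ∀ x, f (T.gen x) = g (T.gen x)) : f = g :=
  PresentedGroup.ext h

section PreGarside

variable (hmu : ∀ x, T.mu x = ⊤)
include hmu

def lift {H : Type*} [Group H] (f : V → H)
    (hf : ∀ ⦃x y⦄, T.graph.Adj x y → f (T.phi x y) * f x = f (T.phi y x) * f y) :
    TrickleGroup T →* H :=
  PresentedGroup.toGroup (f := f) <| by
    rintro r (⟨x, n, hx, -⟩ | ⟨x, y, hxy, rfl⟩)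
    · simp [hmu x] at hx
    · simp [hf hxy]

@[simp] theorem lift_gen {H : Type*} [Group H] (f : V → H)
    (hf : ∀ ⦃x y⦄, T.graph.Adj x y → f (T.phi x y) * f x = f (T.phi y x) * f y) (x : V) :
    lift hmu f hf (T.gen x) = f x :=
  PresentedGroup.toGroup.of _

variable {W : Type*} [PartialOrder W] {T' : TrickleGraph W}

def map (f : T.graph →g T'.graph)
    (hf : ∀ ⦃x y⦄, T.graph.Adj x y → f (T.phi x y) = T'.phi (f x) (f y)) :
    TrickleGroup T →* TrickleGroup T' :=
  lift hmu (fun x => T'.gen (f x)) fun x y hxy => by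
    simpa only [hf hxy, hf hxy.symm] using T'.gen_phi_mul_gen (f.map_adj hxy)

@[simp] theorem map_gen (f : T.graph →g T'.graph)
    (hf : ∀ ⦃x y⦄, T.graph.Adj x y → f (T.phi x y) = T'.phi (f x) (f y)) (x : V) :
    map hmu f hf (T.gen x) = T'.gen (f x) :=
  lift_gen hmu _ _ x

def mapEquiv (hmu' : ∀ x, T'.mu x = ⊤) (e : T.graph ≃g T'.graph)
    (he : ∀ ⦃x y⦄, T.graph.Adj x y → e (T.phi x y) = T'.phi (e x) (e y)) :
    TrickleGroup T ≃* TrickleGroup T' :=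
  have he' : ∀ ⦃x y⦄, T'.graph.Adj x y → e.symm (T'.phi x y) = T.phi (e.symm x) (e.symm y) :=
    fun x y hxy => e.toEquiv.symm_apply_eq.2 <| by
      simpa using (he (e.symm.map_adj_iff.2 hxy)).symm
  MonoidHom.toMulEquiv (map hmu e.toHom he) (map hmu' e.symm.toHom he')
    (hom_ext fun x => by simp) (hom_ext fun x => by simp)

@[simp] theorem mapEquiv_gen (hmu' : ∀ x, T'.mu x = ⊤) (e : T.graph ≃g T'.graph)
    (he : ∀ ⦃x y⦄, T.graph.Adj x y → e (T.phi x y) = T'.phi (e x) (e y)) (x : V) :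
    mapEquiv hmu hmu' e he (T.gen x) = T'.gen (e x) :=
  map_gen hmu e.toHom he x

variable (T) in
def inclusion {Λ₁ Λ₂ : LowerSet V} (h : Λ₁ ≤ Λ₂) :
    TrickleGroup (T.restrict Λ₁) →* TrickleGroup (T.restrict Λ₂) :=
  map (T := T.restrict Λ₁) (fun a => hmu a) (T.graph.induceHomOfLE h).toHom fun _ _ _ => rfl

@[simp] theorem inclusion_gen {Λ₁ Λ₂ : LowerSet V} (h : Λ₁ ≤ Λ₂) (a : Λ₁) :
    T.inclusion hmu h ((T.restrict Λ₁).gen a) = (T.restrict Λ₂).gen (Set.inclusion h a) :=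
  map_gen _ _ _ a

@[simp] theorem inclusion_refl (Λ : LowerSet V) :
    T.inclusion hmu (le_refl Λ) = MonoidHom.id _ :=
  hom_ext fun a => by simp

theorem inclusion_comp_inclusion {Λ₁ Λ₂ Λ₃ : LowerSet V} (h₁₂ : Λ₁ ≤ Λ₂) (h₂₃ : Λ₂ ≤ Λ₃) :
    (T.inclusion hmu h₂₃).comp (T.inclusion hmu h₁₂) = T.inclusion hmu (h₁₂.trans h₂₃) :=
  hom_ext fun a => by simp

end PreGarside

section MaximalVertex

variable (T) {Λ : LowerSet V} {x : V}

def link (hx : Maximal (· ∈ Λ) x) : LowerSet V where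
  carrier := {y ∈ Λ | T.graph.Adj x y}
  lower' _ _ hzy hy := ⟨Λ.lower hzy hy.1, T.adj_of_le_of_adj hy.2 (hx.not_gt hy.1) hzy⟩

theorem link_le_erase (hx : Maximal (· ∈ Λ) x) : T.link hx ≤ Λ.erase x :=
  fun _ hy => (LowerSet.mem_erase_iff_ne_of_maximal hx hy.1).2 hy.2.ne'

theorem link_le (hx : Maximal (· ∈ Λ) x) : T.link hx ≤ Λ := fun _ hy => hy.1

def linkIso (hx : Maximal (· ∈ Λ) x) :
    (T.restrict (T.link hx)).graph ≃g (T.restrict (T.link hx)).graph where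
  toEquiv := (T.phi x).subtypePerm fun v =>
    and_congr (T.phi_mem_iff Λ.lower hx.1 v) T.adj_phi_iff_adj
  map_rel_iff' {a b} := T.adj_phi_iff x a b (Or.inr a.2.2) (Or.inr b.2.2)

variable (hmu : ∀ x, T.mu x = ⊤) (hx : Maximal (· ∈ Λ) x)

def linkAut : TrickleGroup (T.restrict (T.link hx)) ≃* TrickleGroup (T.restrict (T.link hx)) :=
  mapEquiv (T := T.restrict (T.link hx)) (fun a => hmu a) (fun a => hmu a) (T.linkIso hx)
    fun a b hab => Subtype.ext (T.phi_phi_of_adj a.2.2 b.2.2 hab (hx.not_gt a.2.1))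

theorem linkAut_gen (a : T.link hx) :
    T.linkAut hmu hx ((T.restrict (T.link hx)).gen a) =
      (T.restrict (T.link hx)).gen (T.linkIso hx a) :=
  mapEquiv_gen _ _ _ _ a

theorem inclusion_linkAut (w : TrickleGroup (T.restrict (T.link hx))) :
    T.inclusion hmu (T.link_le hx) (T.linkAut hmu hx w) =
      (T.restrict Λ).gen ⟨x, hx.1⟩ * T.inclusion hmu (T.link_le hx) w *
        ((T.restrict Λ).gen ⟨x, hx.1⟩)⁻¹ := by
  have hconj : (T.inclusion hmu (T.link_le hx)).comp (T.linkAut hmu hx).toMonoidHom =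
      (MulAut.conj ((T.restrict Λ).gen ⟨x, hx.1⟩)).toMonoidHom.comp
        (T.inclusion hmu (T.link_le hx)) := by
    refine hom_ext fun a => ?_
    have hrel := (T.restrict Λ).gen_phi_mul_gen (x := ⟨x, hx.1⟩)
      (y := Set.inclusion (T.link_le hx) a) a.2.2
    rw [(T.restrict Λ).phi_apply_of_not_lt (y := ⟨x, hx.1⟩) (hx.not_gt a.2.1)] at hrel
    simp only [MonoidHom.comp_apply, MulEquiv.coe_toMonoidHom, linkAut_gen, inclusion_gen,
      MulAut.conj_apply, ← hrel, mul_inv_cancel_right]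
    rfl
  exact DFunLike.congr_fun hconj w

variable {T hmu hx} (hι : Function.Injective (T.inclusion hmu (T.link_le_erase hx)))

noncomputable def linkConj :
    (T.inclusion hmu (T.link_le_erase hx)).range ≃* (T.inclusion hmu (T.link_le_erase hx)).range :=
  ((MonoidHom.ofInjective hι).symm.trans (T.linkAut hmu hx)).trans (MonoidHom.ofInjective hι)

theorem linkConj_apply (w : TrickleGroup (T.restrict (T.link hx))) :
    (linkConj hι ⟨_, w, rfl⟩ : TrickleGroup (T.restrict (Λ.erase x))) =
      T.inclusion hmu (T.link_le_erase hx) (T.linkAut hmu hx w) := by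
  have hw : (⟨_, w, rfl⟩ : (T.inclusion hmu (T.link_le_erase hx)).range) =
      MonoidHom.ofInjective hι w := Subtype.ext (MonoidHom.ofInjective_apply hι).symm
  simp [linkConj, hw, MonoidHom.ofInjective_apply]

abbrev LinkHNN : Type _ :=
  HNNExtension (TrickleGroup (T.restrict (Λ.erase x))) _ _ (linkConj hι)

theorem t_mul_of_gen {v : V} (hv : v ∈ T.link hx) :
    (HNNExtension.t : LinkHNN hι) *
        HNNExtension.of ((T.restrict (Λ.erase x)).gen ⟨v, T.link_le_erase hx hv⟩) =
      HNNExtension.of ((T.restrict (Λ.erase x)).gen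
        ⟨T.phi x v, T.link_le_erase hx (T.linkIso hx ⟨v, hv⟩).2⟩) * HNNExtension.t := by
  have h := HNNExtension.t_mul_of (φ := linkConj hι)
    ⟨_, (T.restrict (T.link hx)).gen ⟨v, hv⟩, rfl⟩
  rw [linkConj_apply, linkAut_gen] at h
  simp only [inclusion_gen] at h
  exact h

noncomputable def hnnGen (v : Λ) : LinkHNN hι :=
  if h : (v : V) = x then HNNExtension.t
  else HNNExtension.of ((T.restrict (Λ.erase x)).gen
    ⟨v, (LowerSet.mem_erase_iff_ne_of_maximal hx v.2).2 h⟩)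

theorem hnnGen_phi_mul_hnnGen {a b : Λ} (hab : (T.restrict Λ).graph.Adj a b) :
    hnnGen hι ((T.restrict Λ).phi a b) * hnnGen hι a =
      hnnGen hι ((T.restrict Λ).phi b a) * hnnGen hι b := by
  have hfix : ∀ c : Λ, (T.restrict Λ).phi c ⟨x, hx.1⟩ = ⟨x, hx.1⟩ := fun c =>
    (T.restrict Λ).phi_apply_of_not_lt (hx.not_gt c.2)
  have hne : ∀ {c d : Λ}, (d : V) ≠ x → ((T.restrict Λ).phi c d : V) ≠ x := fun {c d} hd h =>
    (T.phi_eq_or_lt c d).elim (fun e => hd (e ▸ h)) (fun hlt => hx.not_gt c.2 (h ▸ hlt))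
  by_cases ha : (a : V) = x
  · obtain rfl : a = ⟨x, hx.1⟩ := Subtype.ext ha
    have hbx : (b : V) ≠ x := fun h => hab.ne' (Subtype.ext h)
    rw [hfix b]
    simp only [hnnGen, dif_pos, dif_neg hbx, dif_neg (hne hbx)]
    exact (t_mul_of_gen hι ⟨b.2, hab⟩).symm
  by_cases hb : (b : V) = x
  · obtain rfl : b = ⟨x, hx.1⟩ := Subtype.ext hb
    rw [hfix a]
    simp only [hnnGen, dif_pos, dif_neg ha, dif_neg (hne ha)]
    exact t_mul_of_gen hι ⟨a.2, hab.symm⟩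
  simp only [hnnGen, dif_neg ha, dif_neg hb, dif_neg (hne ha), dif_neg (hne hb), ← map_mul]
  exact congrArg HNNExtension.of ((T.restrict (Λ.erase x)).gen_phi_mul_gen
    (x := ⟨a, (LowerSet.mem_erase_iff_ne_of_maximal hx a.2).2 ha⟩)
    (y := ⟨b, (LowerSet.mem_erase_iff_ne_of_maximal hx b.2).2 hb⟩) hab)

noncomputable def toHNN : TrickleGroup (T.restrict Λ) →* LinkHNN hι :=
  lift (T := T.restrict Λ) (fun a => hmu a) (hnnGen hι) fun _ _ => hnnGen_phi_mul_hnnGen hι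

noncomputable def ofHNN : LinkHNN hι →* TrickleGroup (T.restrict Λ) :=
  HNNExtension.lift (T.inclusion hmu LowerSet.erase_le) ((T.restrict Λ).gen ⟨x, hx.1⟩) <| by
    rintro ⟨_, w, rfl⟩
    rw [linkConj_apply]
    simp only [← MonoidHom.comp_apply, inclusion_comp_inclusion]
    rw [inclusion_linkAut]
    group

theorem toHNN_gen (a : Λ) : toHNN hι ((T.restrict Λ).gen a) = hnnGen hι a :=
  lift_gen _ _ _ a

theorem ofHNN_comp_toHNN : (ofHNN hι).comp (toHNN hι) = MonoidHom.id _ := by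
  refine hom_ext fun a => ?_
  rw [MonoidHom.comp_apply, toHNN_gen, hnnGen, MonoidHom.id_apply]
  split_ifs with ha
  · obtain rfl : a = ⟨x, hx.1⟩ := Subtype.ext ha
    exact HNNExtension.lift_t _ _ _
  · exact (HNNExtension.lift_of _ _ _ _).trans (inclusion_gen _ _ _)

theorem toHNN_comp_inclusion :
    (toHNN hι).comp (T.inclusion hmu LowerSet.erase_le) = HNNExtension.of := by
  refine hom_ext fun a => ?_
  have ha : (a : V) ≠ x := (LowerSet.mem_erase_iff_ne_of_maximal hx (LowerSet.erase_le a.2)).1 a.2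
  rw [MonoidHom.comp_apply, inclusion_gen, toHNN_gen, hnnGen, dif_neg ha]

include hι in
theorem injective_inclusion_erase :
    Function.Injective (T.inclusion hmu (LowerSet.erase_le (s := Λ) (a := x))) := by
  intro g g' h
  apply HNNExtension.of_injective (φ := linkConj hι)
  rw [← toHNN_comp_inclusion hι, MonoidHom.comp_apply, h, MonoidHom.comp_apply]

include hι in
theorem isTorsionFree_restrict_of_erase
    (htf : Monoid.IsTorsionFree (TrickleGroup (T.restrict (Λ.erase x)))) :
    Monoid.IsTorsionFree (TrickleGroup (T.restrict Λ)) :=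
  (HNNExtension.isTorsionFree htf).of_injective (f := toHNN hι)
    (Function.LeftInverse.injective (g := ofHNN hι) (DFunLike.congr_fun (ofHNN_comp_toHNN hι)))

end MaximalVertex

variable (T)

instance [IsEmpty V] : Subsingleton (TrickleGroup T) where
  allEq g g' := by
    have h : MonoidHom.id (TrickleGroup T) = 1 := hom_ext isEmptyElim
    rw [← MonoidHom.id_apply _ g, ← MonoidHom.id_apply _ g', h, MonoidHom.one_apply,
      MonoidHom.one_apply]

variable [Finite V] {T} (hmu : ∀ x, T.mu x = ⊤)

theorem isTorsionFree_restrict_and_injective_inclusion (Λ : LowerSet V) :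
    Monoid.IsTorsionFree (TrickleGroup (T.restrict Λ)) ∧
      ∀ Λ' (h : Λ' ≤ Λ), Function.Injective (T.inclusion hmu h) := by
  have : Finite (LowerSet V) := Finite.of_injective _ SetLike.coe_injective
  induction Λ using WellFoundedLT.induction with | _ Λ ih => ?_
  have ih_erase {x} (hx : Maximal (· ∈ Λ) x) := ih _ (LowerSet.erase_lt.2 hx.1)
  have hlink {x} (hx : Maximal (· ∈ Λ) x) : Function.Injective
      (T.inclusion hmu (T.link_le_erase hx)) := (ih_erase hx).2 _ _
  refine ⟨?_, fun Λ' h => ?_⟩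
  · rcases (Λ : Set V).eq_empty_or_nonempty with hΛ | ⟨v, hv⟩
    · have : IsEmpty Λ := Set.isEmpty_coe_sort.2 hΛ
      exact Monoid.IsTorsionFree.of_subsingleton
    · obtain ⟨x, -, hx⟩ := Finite.exists_le_maximal (p := (· ∈ Λ)) hv
      exact isTorsionFree_restrict_of_erase (hlink hx) (ih_erase hx).1
  · rcases h.eq_or_lt with rfl | hlt
    · simpa using Function.injective_id
    obtain ⟨v, hvΛ, hvΛ'⟩ := Set.exists_of_ssubset (LowerSet.coe_ssubset_coe.2 hlt)
    obtain ⟨x, hvx, hx⟩ := Finite.exists_le_maximal (p := (· ∈ Λ)) hvΛ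
    have hΛ' : Λ' ≤ Λ.erase x := fun y hy =>
      (LowerSet.mem_erase_iff_ne_of_maximal hx (h hy)).2 fun e => hvΛ' (Λ'.lower hvx (e ▸ hy))
    rw [← inclusion_comp_inclusion hmu hΛ' LowerSet.erase_le]
    exact (injective_inclusion_erase (hlink hx)).comp ((ih_erase hx).2 _ hΛ')

end TrickleGraph

/-- **Theorem 2.16.** If `Γ` is a preGarside trickle graph (i.e. `mu x = ∞` for every vertex)
with finitely many vertices, then the trickle group `Tr(Γ)` is torsion-free. -/
theorem TrickleGroup.isTorsionFree {V : Type u} [PartialOrder V] [Finite V]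
    (T : TrickleGraph V) (hmu : ∀ x : V, T.mu x = ⊤) :
    Monoid.IsTorsionFree (TrickleGroup T) :=
  let e : TrickleGroup (T.restrict ⊤) ≃* TrickleGroup T :=
    TrickleGraph.mapEquiv (T := T.restrict ⊤) (fun a => hmu a) hmu T.graph.induceUnivIso
      fun _ _ _ => rfl
  (T.isTorsionFree_restrict_and_injective_inclusion hmu ⊤).1.of_injective
    (f := e.symm.toMonoidHom) e.symm.injective
end

section
/- Let (Q, *, ≤) be an ordered quandle. Let Γ be the complete graph on Q, let μ(x) = ∞ for all x ∈ Q, and for each x ∈ Q define φ_x : Q → Q by φ_x(y) = y if x ≤ y and φ_x(y) = y * x if y ≤ x. Then the quadruple (Γ, ≤, μ, (φ_x)_{x∈Q}) is a trickle graph. -/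
open scoped Classical

universe u

/-!
The axioms of an ordered quandle make each right translation `· * x` an order automorphism of `Q`
fixing `x`, so it maps `{y | y < x}` onto itself. Hence `φ_x`, the identity above `x` and `· * x`
below it, is an order automorphism of `Q`, and condition (g) is right self-distributivity for
`z < y < x`. As the graph is complete and the order total, every other condition is immediate.
-/

theorem SimpleGraph.inStar_top {V : Type u} (x y : V) : (⊤ : SimpleGraph V).InStar x y :=
  (eq_or_ne y x).imp_right fun h => (SimpleGraph.top_adj x y).2 h.symm

namespace TrickleGraph

variable {V : Type u} [LinearOrder V]

/-- The trickle graph on the complete graph, with all labels `∞` and the given `φ_x`. -/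
def complete (phi : V → Equiv.Perm V) (strictMono_phi : ∀ x, StrictMono (phi x))
    (phi_of_le : ∀ x y, x ≤ y → phi x y = y)
    (phi_phi : ∀ x y z, z < y → y < x → phi x (phi y z) = phi (phi x y) (phi x z)) :
    TrickleGraph V where
  graph := ⊤
  mu _ := ⊤
  phi := phi
  two_le_mu _ := le_top
  adj_of_lt _ _ h := (SimpleGraph.top_adj _ _).2 h.ne
  phi_apply_of_not_inStar x y h := absurd (SimpleGraph.inStar_top x y) h
  inStar_phi x _ _ := SimpleGraph.inStar_top x _
  adj_phi_iff x _ _ _ _ := by simp only [SimpleGraph.top_adj, ne_eq, EmbeddingLike.apply_eq_iff_eq]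
  adj_incomp x y _ _ hxy hyx _ := ((le_total x y).elim hxy hyx).elim
  le_phi_iff x _ _ _ _ := (strictMono_phi x).le_iff_le
  lt_of_phi_ne x y _ h := lt_of_not_ge fun hxy => h (phi_of_le x y hxy)
  phi_pow_mu _ := pow_zero _
  mu_phi _ _ _ := rfl
  phi_phi := phi_phi

end TrickleGraph

namespace OrderedQuandle

variable {Q : Type u} [LinearOrder Q] {op : Q → Q → Q} {x y z : Q}

/-- `lowerAction op x` is the paper's `φ_x`. -/
def lowerAction (op : Q → Q → Q) (x y : Q) : Q := if x ≤ y then y else op y x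

theorem lowerAction_of_le (h : x ≤ y) : lowerAction op x y = y := if_pos h

theorem lowerAction_of_lt (h : y < x) : lowerAction op x y = op y x := if_neg h.not_ge

theorem lowerAction_eq_op_of_le (hidem : ∀ x, op x x = x) (h : y ≤ x) :
    lowerAction op x y = op y x := by
  rcases h.eq_or_lt with rfl | hlt
  · rw [lowerAction_of_le le_rfl, hidem]
  · exact lowerAction_of_lt hlt

theorem op_lt_of_lt (hidem : ∀ x, op x x = x) (hord : ∀ x y z, y ≤ z ↔ op y x ≤ op z x)
    (h : y < x) : op y x < x := by
  simpa only [hidem] using strictMono_of_le_iff_le (hord x) h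

theorem strictMono_lowerAction (hidem : ∀ x, op x x = x)
    (hord : ∀ x y z, y ≤ z ↔ op y x ≤ op z x) (x : Q) : StrictMono (lowerAction op x) := by
  intro y z hyz
  rcases le_or_gt x y with hxy | hyx
  · rwa [lowerAction_of_le hxy, lowerAction_of_le (hxy.trans hyz.le)]
  rw [lowerAction_of_lt hyx]
  rcases le_or_gt x z with hxz | hzx
  · rw [lowerAction_of_le hxz]
    exact (op_lt_of_lt hidem hord hyx).trans_le hxz
  · rw [lowerAction_of_lt hzx]
    exact strictMono_of_le_iff_le (hord x) hyz

theorem surjective_lowerAction (hidem : ∀ x, op x x = x)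
    (hord : ∀ x y z, y ≤ z ↔ op y x ≤ op z x)
    (hsurj : ∀ x, Function.Surjective fun y => op y x) (x : Q) :
    Function.Surjective (lowerAction op x) := by
  intro z
  rcases le_or_gt x z with hxz | hzx
  · exact ⟨z, lowerAction_of_le hxz⟩
  obtain ⟨w, rfl⟩ := hsurj x z
  have hwx : w < x := (strictMono_of_le_iff_le (hord x)).lt_iff_lt.1 (by rwa [hidem])
  exact ⟨w, lowerAction_of_lt hwx⟩

theorem lowerAction_lowerAction (hidem : ∀ x, op x x = x)
    (hdist : ∀ x y z, op (op z x) (op y x) = op (op z y) x)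
    (hord : ∀ x y z, y ≤ z ↔ op y x ≤ op z x) (hzy : z < y) (hyx : y < x) :
    lowerAction op x (lowerAction op y z) =
      lowerAction op (lowerAction op x y) (lowerAction op x z) := by
  rw [lowerAction_of_lt hzy, lowerAction_of_lt hyx, lowerAction_of_lt (hzy.trans hyx),
    lowerAction_of_lt ((op_lt_of_lt hidem hord hzy).trans hyx),
    lowerAction_of_lt (strictMono_of_le_iff_le (hord x) hzy)]
  exact (hdist x y z).symm

noncomputable def lowerActionPerm (hidem : ∀ x, op x x = x) (hord : ∀ x y z, y ≤ z ↔ op y x ≤ op z x)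
    (hsurj : ∀ x, Function.Surjective fun y => op y x) (x : Q) : Equiv.Perm Q :=
  Equiv.ofBijective (lowerAction op x)
    ⟨(strictMono_lowerAction hidem hord x).injective, surjective_lowerAction hidem hord hsurj x⟩

end OrderedQuandle

/-- **Proposition 3.17.** Let `(Q, *, ≤)` be an ordered quandle (axioms (1)–(3) of a quandle,
together with a total order such that `y ≤ z ↔ y * x ≤ z * x`). Let `Γ` be the complete graph
on `Q`, let `μ(x) = ∞` for all `x`, and let `φ_x(y) = y` if `x ≤ y` and `φ_x(y) = y * x` if
`y ≤ x`. Then `(Γ, ≤, μ, (φ_x))` is a trickle graph. -/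
theorem orderedQuandle_trickleGraph {Q : Type u} [LinearOrder Q] (op : Q → Q → Q)
    (h1 : ∀ x : Q, op x x = x)
    (h2 : ∀ x y z : Q, op (op z x) (op y x) = op (op z y) x)
    (h3 : ∀ x : Q, Function.Bijective (fun y : Q => op y x))
    (hord : ∀ x y z : Q, y ≤ z ↔ op y x ≤ op z x) :
    ∃ T : TrickleGraph Q,
      (∀ a b : Q, T.graph.Adj a b ↔ a ≠ b) ∧
      (∀ x : Q, T.mu x = ⊤) ∧
      (∀ x y : Q, (x ≤ y → T.phi x y = y) ∧ (y ≤ x → T.phi x y = op y x)) := by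
  open OrderedQuandle in
  exact ⟨TrickleGraph.complete (lowerActionPerm h1 hord fun x => (h3 x).2)
      (strictMono_lowerAction h1 hord) (fun _ _ => lowerAction_of_le)
      (fun _ _ _ => lowerAction_lowerAction h1 h2 hord),
    SimpleGraph.top_adj, fun _ => rfl, fun _ _ => ⟨lowerAction_of_le, lowerAction_eq_op_of_le h1⟩⟩
end
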